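/- Characterization of the tail space: A measurable function u : ℝⁿ → ℝ belongs to L^g_s(ℝⁿ) if and only if Tail(u; x₀, R) < ∞ for every x₀ ∈ ℝⁿ and every R > 0. -/

import Mathlib

open MeasureTheory Metric Set Filter

noncomputable section

abbrev Rn (n : ℕ) := EuclideanSpace ℝ (Fin n)

/-- The set `C_Ω = (Ω × ℝⁿ) ∪ (ℝⁿ × Ω)`. -/
def CSet {n : ℕ} (Ω : Set (Rn n)) : Set (Rn n × Rn n) :=
  (Ω ×ˢ (Set.univ : Set (Rn n))) ∪ ((Set.univ : Set (Rn n)) ×ˢ Ω)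

/-- Membership in the fractional Orlicz–Sobolev space `𝕎^{s,G}(Ω)`:
`u` is measurable, `∫_Ω G(|u|) < ∞`, and the Gagliardo-type energy over `C_Ω` is finite. -/
def MemWsG {n : ℕ} (G : ℝ → ℝ) (s : ℝ) (Ω : Set (Rn n)) (u : Rn n → ℝ) : Prop :=
  Measurable u ∧ IntegrableOn (fun x => G |u x|) Ω ∧
    IntegrableOn
      (fun z : Rn n × Rn n =>
        G (|u z.1 - u z.2| / ‖z.1 - z.2‖ ^ s) * ‖z.1 - z.2‖ ^ (-(n : ℝ)))
      (CSet Ω)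

/-- Membership in the tail space `L^g_s(ℝⁿ)`. -/
def MemLgs {n : ℕ} (g : ℝ → ℝ) (s : ℝ) (u : Rn n → ℝ) : Prop :=
  Measurable u ∧
    Integrable (fun x : Rn n =>
      g (|u x| / (1 + ‖x‖) ^ s) * (1 + ‖x‖) ^ (-(n : ℝ) - s))

/-- The nonlocal tail `Tail(u; x₀, R)`. -/
def fracTail {n : ℕ} (g : ℝ → ℝ) (s : ℝ) (u : Rn n → ℝ) (x₀ : Rn n) (R : ℝ) : ℝ :=
  ∫ x in (ball x₀ R)ᶜ, g (|u x| / ‖x - x₀‖ ^ s) * ‖x - x₀‖ ^ (-(n : ℝ) - s)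

/-- The weak formulation pairing
`∬_{C_Ω} g(|u(x)-u(y)|/|x-y|^s) sgn(u(x)-u(y)) (η(x)-η(y)) K(x,y) dx dy`. -/
def weakForm {n : ℕ} (g : ℝ → ℝ) (s : ℝ) (K : Rn n → Rn n → ℝ) (Ω : Set (Rn n))
    (u η : Rn n → ℝ) : ℝ :=
  ∫ z in CSet Ω,
    g (|u z.1 - u z.2| / ‖z.1 - z.2‖ ^ s) * Real.sign (u z.1 - u z.2) *
      (η z.1 - η z.2) * K z.1 z.2

/-- `u` is a weak solution of `ℒu = 0` in `Ω`. -/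
def IsWeakSol {n : ℕ} (g G : ℝ → ℝ) (s : ℝ) (K : Rn n → Rn n → ℝ) (Ω : Set (Rn n))
    (u : Rn n → ℝ) : Prop :=
  ∀ η : Rn n → ℝ, MemWsG G s Ω η → (∀ x ∉ Ω, η x = 0) →
    weakForm g s K Ω u η = 0

/-- `u` is a weak subsolution of `ℒu = 0` in `Ω`. -/
def IsWeakSubSol {n : ℕ} (g G : ℝ → ℝ) (s : ℝ) (K : Rn n → Rn n → ℝ) (Ω : Set (Rn n))
    (u : Rn n → ℝ) : Prop :=
  ∀ η : Rn n → ℝ, MemWsG G s Ω η → (∀ x, 0 ≤ η x) → (∀ x ∉ Ω, η x = 0) →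
    weakForm g s K Ω u η ≤ 0

/-- `u` is a weak supersolution of `ℒu = 0` in `Ω`. -/
def IsWeakSuperSol {n : ℕ} (g G : ℝ → ℝ) (s : ℝ) (K : Rn n → Rn n → ℝ) (Ω : Set (Rn n))
    (u : Rn n → ℝ) : Prop :=
  ∀ η : Rn n → ℝ, MemWsG G s Ω η → (∀ x, 0 ≤ η x) → (∀ x ∉ Ω, η x = 0) →
    0 ≤ weakForm g s K Ω u η

/-- Structural conditions on `g` and `G`: `g` is strictly increasing and continuous on `[0,∞)`
with `g(0)=0`, `g(t) → ∞`, `G(t) = ∫₀ᵗ g`, and `p ≤ t g(t)/G(t) ≤ q` for `t > 0`. -/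
def GoodG (p q : ℝ) (g G : ℝ → ℝ) : Prop :=
  StrictMonoOn g (Set.Ici (0 : ℝ)) ∧ ContinuousOn g (Set.Ici (0 : ℝ)) ∧ g 0 = 0 ∧
    (∀ t : ℝ, 0 ≤ t → 0 ≤ g t) ∧ Tendsto g atTop atTop ∧
    (∀ t : ℝ, G t = ∫ τ in (0:ℝ)..t, g τ) ∧
    (∀ t : ℝ, 0 < t → p ≤ t * g t / G t ∧ t * g t / G t ≤ q)

/-- Structural conditions on the kernel `K`: measurable, symmetric and comparable to
`|x-y|^{-n}` with constants `lam ≤ Lam`. -/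
def GoodK (n : ℕ) (lam Lam : ℝ) (K : Rn n → Rn n → ℝ) : Prop :=
  Measurable (Function.uncurry K) ∧ (∀ x y, K x y = K y x) ∧
    ∀ x y : Rn n, x ≠ y →
      lam * ‖x - y‖ ^ (-(n : ℝ)) ≤ K x y ∧ K x y ≤ Lam * ‖x - y‖ ^ (-(n : ℝ))

/-- `Ω` is a bounded domain. -/
def GoodDomain {n : ℕ} (Ω : Set (Rn n)) : Prop :=
  IsOpen Ω ∧ IsConnected Ω ∧ Bornology.IsBounded Ω

/-- `Finv` is the inverse of `F` viewed as a bijection of `[0,∞)`: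
for every `t ≥ 0`, `Finv t ≥ 0` and `F (Finv t) = t`. -/
def IsRightInvOn (F Finv : ℝ → ℝ) : Prop :=
  ∀ t : ℝ, 0 ≤ t → 0 ≤ Finv t ∧ F (Finv t) = t

/-- The nonlocal energy functional `I[v] = ∬_{C_Ω} G(|v(x)-v(y)|/|x-y|^s) K(x,y) dx dy`. -/
def fracEnergy {n : ℕ} (G : ℝ → ℝ) (s : ℝ) (K : Rn n → Rn n → ℝ) (Ω : Set (Rn n))
    (v : Rn n → ℝ) : ℝ :=
  ∫ z in CSet Ω, G (|v z.1 - v z.2| / ‖z.1 - z.2‖ ^ s) * K z.1 z.2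

/-! Since `t g(t) ≤ q G(t)`, the function `G(t) t^{-q}` is nonincreasing; together with
`G(t) ≤ t g(t)` this gives `g(c t) ≤ q c^q g(t)` for `c ≥ 1`. Hence the weight
`g(t/r^s) r^{-n-s}` decreases in `r` and grows by at most a constant factor when `r` is divided
by a constant. Outside `B_R(x₀)` the distances `1 + |x|` and `|x - x₀|` are comparable, so the two
integrands are; for the converse, `ℝⁿ` is covered by the complements of two disjoint unit balls. -/

section Growth

variable {q : ℝ}

lemma antitoneOn_mul_rpow_neg {F f : ℝ → ℝ} (hF : ∀ x > 0, HasDerivAt F (f x) x)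
    (hfF : ∀ x > 0, x * f x ≤ q * F x) : AntitoneOn (fun x => F x * x ^ (-q)) (Ioi 0) := by
  have hderiv : ∀ x > 0, HasDerivAt (fun y => F y * y ^ (-q))
      (f x * x ^ (-q) + F x * (-q * x ^ (-q - 1))) x := fun x hx =>
    (hF x hx).mul (Real.hasDerivAt_rpow_const (Or.inl hx.ne'))
  refine antitoneOn_of_hasDerivWithinAt_nonpos (convex_Ioi 0)
    (fun x hx => (hderiv x hx).continuousAt.continuousWithinAt)
    (fun x hx => (hderiv x (interior_subset hx)).hasDerivWithinAt) fun x hx => ?_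
  rw [interior_Ioi] at hx
  have hx0 : (0 : ℝ) < x := hx
  have hxq : x ^ (-q) = x * x ^ (-q - 1) := by
    conv_lhs => rw [show -q = 1 + (-q - 1) by ring, Real.rpow_add hx0, Real.rpow_one]
  calc f x * x ^ (-q) + F x * (-q * x ^ (-q - 1))
      = (x * f x - q * F x) * x ^ (-q - 1) := by rw [hxq]; ring
    _ ≤ 0 := mul_nonpos_of_nonpos_of_nonneg (by linarith [hfF x hx0]) (by positivity)

lemma apply_mul_le_rpow_mul_of_mul_deriv_le {F f : ℝ → ℝ} (hF : ∀ x > 0, HasDerivAt F (f x) x)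
    (hfF : ∀ x > 0, x * f x ≤ q * F x) {c t : ℝ} (hc : 1 ≤ c) (ht : 0 < t) :
    F (c * t) ≤ c ^ q * F t := by
  have hct : 0 < c * t := by positivity
  have h := antitoneOn_mul_rpow_neg hF hfF (mem_Ioi.2 ht) (mem_Ioi.2 hct)
    (le_mul_of_one_le_left ht.le hc)
  simp only [Real.mul_rpow (by positivity : (0 : ℝ) ≤ c) ht.le, Real.rpow_neg ht.le,
    Real.rpow_neg (by positivity : (0 : ℝ) ≤ c)] at h
  have htq : 0 < t ^ q := Real.rpow_pos_of_pos ht q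
  calc F (c * t) = F (c * t) * ((c ^ q)⁻¹ * (t ^ q)⁻¹) * (c ^ q * t ^ q) := by field_simp
    _ ≤ F t * (t ^ q)⁻¹ * (c ^ q * t ^ q) := by gcongr
    _ = c ^ q * F t := by field_simp

end Growth

def tailWeight (g : ℝ → ℝ) (s d t r : ℝ) : ℝ := g (t / r ^ s) * r ^ (-d - s)

lemma measurable_tailWeight {X : Type*} [MeasurableSpace X] {g : ℝ → ℝ} {s d : ℝ}
    (hg : ContinuousOn g (Ici 0)) {u B : X → ℝ} (hu : Measurable u) (hB : Measurable B)
    (hB0 : ∀ x, 0 ≤ B x) :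
    Measurable fun x => tailWeight g s d |u x| (B x) := by
  have harg : Measurable fun x => |u x| / B x ^ s := hu.abs.div (hB.pow_const s)
  have hgarg : Measurable fun x => g (|u x| / B x ^ s) :=
    hg.domRestrict.measurable.comp
      (harg.subtype_mk
        (h := fun x => mem_Ici.2 (div_nonneg (abs_nonneg _) (Real.rpow_nonneg (hB0 x) s))))
  exact hgarg.mul (hB.pow_const _)

namespace GoodG

variable {p q : ℝ} {g G : ℝ → ℝ} {s d : ℝ}

lemma hasDerivAt_primitive (hgG : GoodG p q g G) {x : ℝ} (hx : 0 < x) :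
    HasDerivAt G (g x) x := by
  have hcont : ContinuousOn g (Ici 0) := hgG.2.1
  rw [show G = fun t => ∫ τ in (0 : ℝ)..t, g τ from funext hgG.2.2.2.2.2.1]
  refine intervalIntegral.integral_hasDerivAt_right
    ((hcont.mono ?_).intervalIntegrable)
    ⟨Ici 0, Ici_mem_nhds hx, hcont.aestronglyMeasurable measurableSet_Ici⟩
    (hcont.continuousAt (Ici_mem_nhds hx))
  rw [uIcc_of_le hx.le]
  exact Icc_subset_Ici_self

lemma primitive_pos (hgG : GoodG p q g G) {t : ℝ} (ht : 0 < t) : 0 < G t := by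
  obtain ⟨hmono, hcont, hg0, -, -, hG, -⟩ := hgG
  rw [hG]
  refine intervalIntegral.intervalIntegral_pos_of_pos_on
    ((hcont.mono ?_).intervalIntegrable) (fun x hx => ?_) ht
  · rw [uIcc_of_le ht.le]
    exact Icc_subset_Ici_self
  · exact hg0 ▸ hmono self_mem_Ici (le_of_lt hx.1) hx.1

lemma primitive_le_mul_apply (hgG : GoodG p q g G) {t : ℝ} (ht : 0 ≤ t) : G t ≤ t * g t := by
  obtain ⟨hmono, hcont, -, -, -, hG, -⟩ := hgG
  have hint : IntervalIntegrable g MeasureTheory.volume 0 t := by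
    refine (hcont.mono ?_).intervalIntegrable
    rw [uIcc_of_le ht]
    exact Icc_subset_Ici_self
  calc G t = ∫ τ in (0 : ℝ)..t, g τ := hG t
    _ ≤ ∫ _ in (0 : ℝ)..t, g t :=
        intervalIntegral.integral_mono_on ht hint intervalIntegrable_const
          fun x hx => hmono.monotoneOn hx.1 (le_trans hx.1 hx.2) hx.2
    _ = t * g t := by simp

lemma mul_apply_le_primitive (hgG : GoodG p q g G) {t : ℝ} (ht : 0 < t) : t * g t ≤ q * G t :=
  (div_le_iff₀ (hgG.primitive_pos ht)).1 ((hgG.2.2.2.2.2.2 t ht).2)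

lemma one_le (hgG : GoodG p q g G) : 1 ≤ q := by
  have h := (hgG.primitive_le_mul_apply zero_le_one).trans (hgG.mul_apply_le_primitive one_pos)
  exact le_of_mul_le_mul_right (by rwa [one_mul]) (hgG.primitive_pos one_pos)

lemma apply_mul_le (hgG : GoodG p q g G) {c t : ℝ} (hc : 1 ≤ c) (ht : 0 ≤ t) :
    g (c * t) ≤ q * c ^ q * g t := by
  rcases ht.eq_or_lt with rfl | ht
  · simp [hgG.2.2.1]
  have hct : 0 < c * t := by positivity
  have hG := apply_mul_le_rpow_mul_of_mul_deriv_le (fun x hx => hgG.hasDerivAt_primitive hx)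
    (fun x hx => hgG.mul_apply_le_primitive hx) hc ht
  have hgct : 0 ≤ g (c * t) := hgG.2.2.2.1 _ hct.le
  have hq : 0 ≤ q := zero_le_one.trans hgG.one_le
  refine le_of_mul_le_mul_left ?_ ht
  calc t * g (c * t) ≤ c * t * g (c * t) := by gcongr; nlinarith
    _ ≤ q * G (c * t) := hgG.mul_apply_le_primitive hct
    _ ≤ q * (c ^ q * (t * g t)) := by
        gcongr
        exact hG.trans (by gcongr; exact hgG.primitive_le_mul_apply ht.le)
    _ = t * (q * c ^ q * g t) := by ring


lemma tailWeight_nonneg (hgG : GoodG p q g G) {t r : ℝ} (ht : 0 ≤ t) (hr : 0 ≤ r) :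
    0 ≤ tailWeight g s d t r :=
  mul_nonneg (hgG.2.2.2.1 _ (by positivity)) (by positivity)

lemma tailWeight_antitoneOn (hgG : GoodG p q g G) (hs : 0 ≤ s) (hd : 0 ≤ d) {t : ℝ}
    (ht : 0 ≤ t) : AntitoneOn (tailWeight g s d t) (Ioi 0) := by
  intro a (ha : 0 < a) b (hb : 0 < b) hab
  have hargs : t / b ^ s ≤ t / a ^ s := by gcongr
  exact mul_le_mul
    (hgG.1.monotoneOn (mem_Ici.2 (by positivity)) (mem_Ici.2 (by positivity)) hargs)
    (Real.rpow_le_rpow_of_nonpos ha hab (by linarith)) (by positivity)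
    (hgG.2.2.2.1 _ (by positivity))

lemma tailWeight_div_le (hgG : GoodG p q g G) (hs : 0 ≤ s) {c t r : ℝ} (hc : 1 ≤ c)
    (ht : 0 ≤ t) (hr : 0 < r) :
    tailWeight g s d t (r / c) ≤ q * (c ^ s) ^ q * c ^ (d + s) * tailWeight g s d t r := by
  have hc0 : 0 < c := by linarith
  have hscale : tailWeight g s d t (r / c) =
      g (c ^ s * (t / r ^ s)) * (c ^ (d + s) * r ^ (-d - s)) := by
    rw [tailWeight, Real.div_rpow hr.le hc0.le, Real.div_rpow hr.le hc0.le,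
      show -d - s = -(d + s) by ring, Real.rpow_neg hc0.le]
    field_simp
  rw [hscale, tailWeight]
  calc g (c ^ s * (t / r ^ s)) * (c ^ (d + s) * r ^ (-d - s))
      ≤ q * (c ^ s) ^ q * g (t / r ^ s) * (c ^ (d + s) * r ^ (-d - s)) := by
        gcongr
        exact hgG.apply_mul_le (Real.one_le_rpow hc hs) (by positivity)
    _ = q * (c ^ s) ^ q * c ^ (d + s) * (g (t / r ^ s) * r ^ (-d - s)) := by ring

lemma tailWeight_le_of_le_mul (hgG : GoodG p q g G) (hs : 0 ≤ s) (hd : 0 ≤ d) {c t A B : ℝ}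
    (hc : 1 ≤ c) (ht : 0 ≤ t) (hA : 0 < A) (hAB : A ≤ c * B) :
    tailWeight g s d t B ≤ q * (c ^ s) ^ q * c ^ (d + s) * tailWeight g s d t A := by
  have hc0 : 0 < c := by linarith
  have hAc : A / c ≤ B := by rwa [div_le_iff₀' hc0]
  have hAc0 : 0 < A / c := div_pos hA hc0
  exact (hgG.tailWeight_antitoneOn hs hd ht hAc0 (hAc0.trans_le hAc) hAc).trans
    (hgG.tailWeight_div_le hs hc ht hA)

lemma integrableOn_tailWeight_of_le_mul {X : Type*} [MeasurableSpace X] {μ : Measure X}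
    (hgG : GoodG p q g G) (hs : 0 ≤ s) (hd : 0 ≤ d) {S : Set X} (hS : MeasurableSet S)
    {u A B : X → ℝ} (hu : Measurable u) (hB : Measurable B) (hB0 : ∀ x, 0 ≤ B x) {c : ℝ}
    (hc : 1 ≤ c) (hA : ∀ x ∈ S, 0 < A x) (hAB : ∀ x ∈ S, A x ≤ c * B x)
    (hint : IntegrableOn (fun x => tailWeight g s d |u x| (A x)) S μ) :
    IntegrableOn (fun x => tailWeight g s d |u x| (B x)) S μ := by
  refine (hint.const_mul (q * (c ^ s) ^ q * c ^ (d + s))).mono'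
    (measurable_tailWeight hgG.2.1 hu hB hB0).aestronglyMeasurable
    (ae_restrict_of_forall_mem hS fun x hx => ?_)
  rw [Real.norm_of_nonneg (hgG.tailWeight_nonneg (abs_nonneg _) (hB0 x))]
  exact hgG.tailWeight_le_of_le_mul hs hd hc (abs_nonneg _) (hA x hx) (hAB x hx)

section Tail

variable {E : Type*} [NormedAddCommGroup E] [MeasurableSpace E] [OpensMeasurableSpace E]
  {μ : Measure E} {u : E → ℝ}

lemma integrableOn_tail_of_integrable (hgG : GoodG p q g G) (hs : 0 ≤ s) (hd : 0 ≤ d)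
    (hu : Measurable u) (hint : Integrable (fun x => tailWeight g s d |u x| (1 + ‖x‖)) μ)
    (x₀ : E) {R : ℝ} (hR : 0 < R) :
    IntegrableOn (fun x => tailWeight g s d |u x| ‖x - x₀‖) (ball x₀ R)ᶜ μ := by
  refine hgG.integrableOn_tailWeight_of_le_mul hs hd measurableSet_ball.compl hu
    (continuous_id.sub continuous_const).norm.measurable (fun x => norm_nonneg _)
    (c := 1 + (1 + ‖x₀‖) / R) (le_add_of_nonneg_right (by positivity))
    (fun x _ => by positivity) (fun x hx => ?_) hint.integrableOn
  have hxR : R ≤ ‖x - x₀‖ := by simpa [dist_eq_norm] using hx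
  have hfar : 1 + ‖x₀‖ ≤ (1 + ‖x₀‖) / R * ‖x - x₀‖ := by
    rw [div_mul_eq_mul_div, le_div_iff₀ hR]
    gcongr
  linarith [norm_le_norm_sub_add x x₀]

lemma integrableOn_compl_ball_of_tail (hgG : GoodG p q g G) (hs : 0 ≤ s) (hd : 0 ≤ d)
    (hu : Measurable u) {a : E} {R : ℝ} (hR : 0 < R)
    (hint : IntegrableOn (fun x => tailWeight g s d |u x| ‖x - a‖) (ball a R)ᶜ μ) :
    IntegrableOn (fun x => tailWeight g s d |u x| (1 + ‖x‖)) (ball a R)ᶜ μ := by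
  refine hgG.integrableOn_tailWeight_of_le_mul hs hd measurableSet_ball.compl hu
    (measurable_const.add measurable_norm) (fun x => by positivity)
    (c := 1 + ‖a‖) (le_add_of_nonneg_right (norm_nonneg a))
    (fun x hx => ?_) (fun x _ => ?_) hint
  · have hxR : R ≤ ‖x - a‖ := by simpa [dist_eq_norm] using hx
    linarith
  · nlinarith [norm_sub_le x a, norm_nonneg x, norm_nonneg a]

lemma integrable_of_forall_tail [NormedSpace ℝ E] [Nontrivial E] (hgG : GoodG p q g G)
    (hs : 0 ≤ s) (hd : 0 ≤ d) (hu : Measurable u)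
    (h : ∀ (x₀ : E) (R : ℝ), 0 < R →
      IntegrableOn (fun x => tailWeight g s d |u x| ‖x - x₀‖) (ball x₀ R)ᶜ μ) :
    Integrable (fun x => tailWeight g s d |u x| (1 + ‖x‖)) μ := by
  obtain ⟨a, ha⟩ := exists_norm_eq E zero_le_two
  have hcover : (ball 0 1)ᶜ ∪ (ball a 1)ᶜ = (univ : Set E) := by
    rw [← compl_inter, (ball_disjoint_ball (by norm_num [ha])).inter_eq, compl_empty]
  rw [← integrableOn_univ, ← hcover]
  exact (hgG.integrableOn_compl_ball_of_tail hs hd hu one_pos (h 0 1 one_pos)).union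
    (hgG.integrableOn_compl_ball_of_tail hs hd hu one_pos (h a 1 one_pos))

end Tail

end GoodG

theorem statement11_general (n : ℕ) (hn : 2 ≤ n) (s p q : ℝ)
    (hs0 : 0 < s)
    (g G : ℝ → ℝ) (hgG : GoodG p q g G)
    (u : Rn n → ℝ) (hu_meas : Measurable u) :
    MemLgs g s u ↔
      ∀ (x₀ : Rn n) (R : ℝ), 0 < R →
        IntegrableOn
          (fun x => g (|u x| / ‖x - x₀‖ ^ s) * ‖x - x₀‖ ^ (-(n : ℝ) - s))
          ((ball x₀ R)ᶜ) := by
  have hd : (0 : ℝ) ≤ n := n.cast_nonneg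
  constructor
  · rintro ⟨-, hint⟩ x₀ R hR
    exact hgG.integrableOn_tail_of_integrable hs0.le hd hu_meas hint x₀ hR
  · intro h
    have : NeZero n := ⟨by omega⟩
    exact ⟨hu_meas, hgG.integrable_of_forall_tail hs0.le hd hu_meas h⟩

/-- characterization of the tail space: a measurable `u`
belongs to `L^g_s(ℝⁿ)` if and only if `Tail(u;x₀,R) < ∞` for every `x₀` and `R > 0`,
finiteness being expressed as integrability of the tail integrand. -/
theorem statement11 (n : ℕ) (hn : 2 ≤ n) (s p q : ℝ)
    (hs0 : 0 < s) (hs1 : s < 1) (hp : 1 < p) (hpq : p ≤ q)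
    (g G : ℝ → ℝ) (hgG : GoodG p q g G)
    (u : Rn n → ℝ) (hu_meas : Measurable u) :
    MemLgs g s u ↔
      ∀ (x₀ : Rn n) (R : ℝ), 0 < R →
        IntegrableOn
          (fun x => g (|u x| / ‖x - x₀‖ ^ s) * ‖x - x₀‖ ^ (-(n : ℝ) - s))
          ((ball x₀ R)ᶜ) :=
  statement11_general n hn s p q hs0 g G hgG u hu_meas
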